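/- Let X be a Lefschetz complex over a ring R with unity, let 𝒱 be a multivector field on X with X invariant, and let 𝓜 = {M_r : r ∈ ℙ} be a Morse decomposition of X. If I is a lower set in ℙ (i.e. r′ ≤ r and r ∈ I imply r′ ∈ I), then the Morse set M(I) is an attractor in X. -/

import Mathlib

open scoped Classical

namespace CMVF

variable {R : Type*} [Ring R] {X : Type*} [Fintype X]

/-- A Lefschetz complex over `R` with cells `X`. -/
structure Lefschetz (R : Type*) [Ring R] (X : Type*) [Fintype X] where
  dim : X → ℕ
  κ : X → X → R
  dim_facet : ∀ x y, κ x y ≠ 0 → dim x = dim y + 1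
  κ_sq : ∀ x z, (∑ y : X, κ x y * κ y z) = 0

namespace Lefschetz

variable (L : Lefschetz R X)

/-- The face order `y ≤κ x` : the partial order generated by the facet relation. -/
def le (y x : X) : Prop := Relation.ReflTransGen (fun a b => L.κ b a ≠ 0) y x

/-- Closure of a set of cells: all faces of cells of `A`. -/
def cls (A : Set X) : Set X := {z | ∃ a ∈ A, L.le z a}

/-- Closure of a single cell. -/
def clPt (x : X) : Set X := L.cls {x}

/-- The minimal open set containing `x`. -/
def opn (x : X) : Set X := {z | L.le x z}

/-- `A` is closed. -/
def Closed (A : Set X) : Prop := L.cls A = A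

/-- The mouth of `A`. -/
def mo (A : Set X) : Set X := L.cls A \ A

/-- `A` is proper: its mouth is closed. -/
def Proper (A : Set X) : Prop := L.Closed (L.mo A)

/-- Relative closure within an ambient subcomplex `W`. -/
def clsIn (W A : Set X) : Set X := L.cls A ∩ W

/-- Relative mouth within an ambient subcomplex `W`. -/
def moIn (W A : Set X) : Set X := L.clsIn W A \ A

/-- The boundary operator of the subcomplex determined by `A`
(`∂ x = ∑ y ∈ A, κ x y • y` for `x ∈ A`). -/
noncomputable def bd (A : Set X) : (X → R) →ₗ[R] (X → R) where
  toFun f := fun y => if y ∈ A then ∑ x : X, (if x ∈ A then f x * L.κ x y else 0) else 0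
  map_add' f g := by
    funext y
    by_cases hy : y ∈ A
    · simp only [hy, if_true, Pi.add_apply]
      rw [← Finset.sum_add_distrib]
      refine Finset.sum_congr rfl fun x _ => ?_
      by_cases hx : x ∈ A <;> simp [hx, add_mul]
    · simp [hy]
  map_smul' r f := by
    funext y
    by_cases hy : y ∈ A
    · simp only [hy, if_true, Pi.smul_apply, smul_eq_mul, RingHom.id_apply]
      rw [Finset.mul_sum]
      refine Finset.sum_congr rfl fun x _ => ?_
      by_cases hx : x ∈ A <;> simp [hx, mul_assoc]
    · simp [hy]

/-- The `n`-chains of the subcomplex determined by `A`. -/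
noncomputable def chainGroup (A : Set X) (n : ℕ) : Submodule R (X → R) :=
  Submodule.span R {f | ∃ x ∈ A, L.dim x = n ∧ f = Pi.single x 1}

/-- The `n`-cycles of the subcomplex determined by `A`. -/
noncomputable def cycles (A : Set X) (n : ℕ) : Submodule R (X → R) :=
  L.chainGroup A n ⊓ LinearMap.ker (L.bd A)

/-- The `n`-boundaries of the subcomplex determined by `A`. -/
noncomputable def boundaries (A : Set X) (n : ℕ) : Submodule R (X → R) :=
  (L.chainGroup A (n + 1)).map (L.bd A)

/-- The Lefschetz homology `H^κ_n(A)` of the subcomplex determined by `A`. -/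
noncomputable def homology (A : Set X) (n : ℕ) : Type _ :=
  (L.cycles A n) ⧸ ((L.boundaries A n).comap (L.cycles A n).subtype)

noncomputable instance homologyAddCommGroup (A : Set X) (n : ℕ) :
    AddCommGroup (L.homology A n) :=
  inferInstanceAs (AddCommGroup
    ((L.cycles A n) ⧸ ((L.boundaries A n).comap (L.cycles A n).subtype)))

noncomputable instance homologyModule (A : Set X) (n : ℕ) :
    Module R (L.homology A n) :=
  inferInstanceAs (Module R
    ((L.cycles A n) ⧸ ((L.boundaries A n).comap (L.cycles A n).subtype)))

/-- `A` is a zero space: its Lefschetz homology vanishes. -/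
def HomologyZero (A : Set X) : Prop := ∀ n, Subsingleton (L.homology A n)

/-- The Poincaré polynomial `p_A(t) = ∑ rank H^κ_n(A) tⁿ`. -/
noncomputable def poincare (A : Set X) : Polynomial ℕ :=
  ∑ n ∈ Finset.image L.dim Finset.univ,
    Polynomial.C (Module.finrank R (L.homology A n)) * Polynomial.X ^ n

/-- `V` is a multivector: proper, with a unique maximal element. -/
def IsMV (V : Set X) : Prop :=
  L.Proper V ∧ ∃! m, m ∈ V ∧ ∀ x ∈ V, L.le x m

/-- A regular multivector: one with vanishing Lefschetz homology. -/
def Regular (V : Set X) : Prop := L.HomologyZero V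

end Lefschetz

/-- A combinatorial multivector field on a Lefschetz complex: a partition into multivectors. -/
structure MVField {R : Type*} [Ring R] {X : Type*} [Fintype X] (L : Lefschetz R X) where
  mvs : Set (Set X)
  isMV : ∀ V ∈ mvs, L.IsMV V
  cover : ∀ x : X, ∃! V, V ∈ mvs ∧ x ∈ V

namespace MVField

variable {L : Lefschetz R X} (F : MVField L)

/-- `[x]` : the multivector containing `x`. -/
noncomputable def mclass (x : X) : Set X := (F.cover x).exists.choose

lemma mclass_spec (x : X) : F.mclass x ∈ F.mvs ∧ x ∈ F.mclass x :=
  (F.cover x).exists.choose_spec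

/-- `x★` : the dominant cell of the multivector containing `x`. -/
noncomputable def star (x : X) : X :=
  ((F.isMV _ (F.mclass_spec x).1).2).exists.choose

/-- `[x]°` : the regular part of the multivector of `x`. -/
noncomputable def regPart (x : X) : Set X :=
  if L.Regular (F.mclass x) then F.mclass x else F.mclass x \ {F.star x}

/-- The multivalued map `Π_𝒱`. -/
noncomputable def Pi (x : X) : Set X :=
  if x = F.star x then L.clPt x \ F.regPart x else {F.star x}

/-- The multivalued map of the multivector field restricted to the subcomplex `W`. -/
noncomputable def PiIn (W : Set X) (x : X) : Set X := F.Pi x ∩ W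

/-- `φ : ℤ → X` is a full solution of the multivector field restricted to `W`. -/
def IsSolIn (W : Set X) (φ : ℤ → X) : Prop := ∀ i, φ (i + 1) ∈ F.PiIn W (φ i)

/-- There is a full solution (of the field restricted to `W`) through `x` with values in `A`. -/
def FullSolThroughIn (W : Set X) (x : X) (A : Set X) : Prop :=
  ∃ φ : ℤ → X, F.IsSolIn W φ ∧ (∃ i, φ i = x) ∧ ∀ i, φ i ∈ A

/-- `A` is `𝒱`-compatible. -/
def Compat (A : Set X) : Prop := ∀ x ∈ A, F.mclass x ⊆ A

/-- `[A]⁻` : the maximal `𝒱`-compatible subset of `A`. -/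
def lowerC (A : Set X) : Set X := {x ∈ A | F.mclass x ⊆ A}

/-- `[A]⁺` : the minimal `𝒱`-compatible superset of `A`. -/
def upperC (A : Set X) : Set X := ⋃ x ∈ A, F.mclass x

/-- `Inv A`, the invariant part of `A`, computed in the subcomplex `W`. -/
def InvPartIn (W A : Set X) : Set X :=
  {x ∈ A | F.FullSolThroughIn W (F.star x) (F.lowerC A)}

/-- `A` is invariant (within the subcomplex `W`). -/
def InvariantIn (W A : Set X) : Prop := F.InvPartIn W A = A

/-- `φ` is a path (solution) on the integer interval `[a,b]`, within the subcomplex `W`. -/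
def IsPathOnIn (W : Set X) (a b : ℤ) (φ : ℤ → X) : Prop :=
  ∀ i, a ≤ i → i < b → φ (i + 1) ∈ F.PiIn W (φ i)

/-- `S` admits an internal tangency within the subcomplex `W`. -/
def HasInternalTangencyIn (W S : Set X) : Prop :=
  ∃ (a b : ℤ) (φ : ℤ → X), a ≤ b ∧ F.IsPathOnIn W a b φ ∧
    (∀ i, a ≤ i → i ≤ b → φ i ∈ L.clsIn W S) ∧ φ a ∈ S ∧ φ b ∈ S ∧
    ∃ i, a ≤ i ∧ i ≤ b ∧ φ i ∈ L.moIn W S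

/-- `S` is an isolated invariant set within the subcomplex `W`. -/
def IsoInvIn (W S : Set X) : Prop :=
  F.InvariantIn W S ∧ ¬ F.HasInternalTangencyIn W S

/-- `N` is a trapping region within the subcomplex `W`. -/
def TrappingIn (W N : Set X) : Prop :=
  N ⊆ W ∧ F.Compat N ∧ ∀ x ∈ N, F.PiIn W x ⊆ N

/-- `N` is a backward trapping region within the subcomplex `W`. -/
def BackTrappingIn (W N : Set X) : Prop :=
  N ⊆ W ∧ F.Compat N ∧ ∀ x ∈ W, ∀ y ∈ F.PiIn W x, y ∈ N → x ∈ N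

/-- `A` is an attractor within the subcomplex `W`. -/
def AttractorIn (W A : Set X) : Prop :=
  ∃ N, F.TrappingIn W N ∧ A = F.InvPartIn W N

/-- `A` is a repeller within the subcomplex `W`. -/
def RepellerIn (W A : Set X) : Prop :=
  ∃ N, F.BackTrappingIn W N ∧ A = F.InvPartIn W N

/-- The α-limit set of a full solution `φ`. -/
def alphaIn (W : Set X) (φ : ℤ → X) : Set X :=
  ⋂ k : ℕ, F.InvPartIn W (F.upperC (φ '' {i : ℤ | i ≤ -(k : ℤ)}))

/-- The ω-limit set of a full solution `φ`. -/
def omegaIn (W : Set X) (φ : ℤ → X) : Set X :=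
  ⋂ k : ℕ, F.InvPartIn W (F.upperC (φ '' {i : ℤ | (k : ℤ) ≤ i}))

/-- `C(A',A)` : the set of cells lying on connections running from `A'` to `A`. -/
def ConnIn (W A' A : Set X) : Set X :=
  {x | ∃ φ : ℤ → X, F.IsSolIn W φ ∧ (∃ i, φ i = F.star x) ∧
        F.alphaIn W φ ⊆ A' ∧ F.omegaIn W φ ⊆ A}

/-- `(A, Rp)` is an attractor-repeller pair in the subcomplex `W`. -/
def ARPairIn (W A Rp : Set X) : Prop :=
  F.AttractorIn W A ∧ F.RepellerIn W Rp ∧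
    A = F.InvPartIn W (W \ Rp) ∧ Rp = F.InvPartIn W (W \ A)

/-- `M` is a Morse decomposition of the subcomplex `W`, with admissible order `le`. -/
def MorseDecompIn (W : Set X) {P : Type*} [Finite P] (le : P → P → Prop)
    (M : P → Set X) : Prop :=
  IsPartialOrder P le ∧
  (∀ r, F.IsoInvIn W (M r)) ∧
  (∀ r r', r ≠ r' → Disjoint (M r) (M r')) ∧
  (∀ φ : ℤ → X, F.IsSolIn W φ →
    ∃ r r', le r r' ∧ F.alphaIn W φ ⊆ M r' ∧ F.omegaIn W φ ⊆ M r) ∧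
  (∀ φ : ℤ → X, F.IsSolIn W φ → ∀ r,
    F.alphaIn W φ ⊆ M r → F.omegaIn W φ ⊆ M r → Set.range φ ⊆ M r)

/-- The Morse set `M(I)` of a family of sets indexed by `I ⊆ P`. -/
def MorseSetIn (W : Set X) {P : Type*} (M : P → Set X) (I : Set P) : Set X :=
  ⋃ r ∈ I, ⋃ r' ∈ I, F.ConnIn W (M r') (M r)

/-- `(P₁, P₂)` is an index pair for the isolated invariant set `S`. -/
def IndexPair (S P₁ P₂ : Set X) : Prop :=
  L.Closed P₁ ∧ L.Closed P₂ ∧ P₂ ⊆ P₁ ∧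
  (∀ x ∈ P₂, ∀ y ∈ F.Pi x, y ∈ P₁ → y ∈ P₂) ∧
  (∀ x ∈ P₁, (∃ y ∈ F.Pi x, y ∉ P₁) → x ∈ P₂) ∧
  S = F.InvPartIn Set.univ (P₁ \ P₂)

/-- `x ⤳_A y` : there is a path of length at least two in `A` from `x★` to `y★`. -/
def PathConn (A : Set X) (x y : X) : Prop :=
  ∃ (a b : ℤ) (φ : ℤ → X), a < b ∧
    (∀ i, a ≤ i → i < b → φ (i + 1) ∈ F.Pi (φ i)) ∧
    (∀ i, a ≤ i → i ≤ b → φ i ∈ A) ∧ φ a = F.star x ∧ φ b = F.star y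

/-- The chain recurrent set. -/
def CR : Set X := {x | F.PathConn Set.univ x x}

/-- `B` is a basic set: an equivalence class of mutual connectedness in `CR`. -/
def IsBasicSet (B : Set X) : Prop :=
  ∃ x ∈ F.CR, B = {y ∈ F.CR | F.PathConn Set.univ x y ∧ F.PathConn Set.univ y x}

/-- The set `E_P` of cells of `P₁` all of whose forward solutions meet `P₂`. -/
def Ep (P₁ P₂ : Set X) : Set X :=
  {x ∈ P₁ | ∀ φ : ℕ → X, φ 0 = x → (∀ i, φ (i + 1) ∈ F.Pi (φ i)) → ∃ i, φ i ∈ P₂}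

/-- The preorder `≤_𝒱` induced by the arrows of the multivector field. -/
def leV : X → X → Prop := Relation.ReflTransGen (fun y x => y ∈ F.Pi x)

/-- The multivector field is acyclic: `≤_𝒱` is a partial order. -/
def Acyclic : Prop := ∀ x y, F.leV x y → F.leV y x → x = y

end MVField

end CMVF

open CMVF

/-!
The trapping region is the unstable set `N` of `⋃ r ∈ I, M r`: the cells whose multivector is
visited by a full solution with α-limit set in `⋃ r ∈ I, M r`. Since `X` is invariant, every
arrow leaving a cell of `N` continues to a full solution, so `N` is trapping, and every
connection between Morse sets indexed by `I` lies in `Inv N`. Conversely, a full solution in `N`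
has its α-limit set in some `M s'`, and that limit set meets `N`; gluing a solution coming from
`⋃ r ∈ I, M r` to one staying in the invariant set `M s'` gives a connection into `M s'`, so
`s'`, and with it the index of the ω-limit set, lies in the lower set `I`. Limit sets are
nonempty because `X` is finite: some cell recurs infinitely often, and the segment of a solution
between two visits repeats periodically.
-/

namespace CMVF.MVField

variable {R : Type*} [Ring R] {X : Type*} [Fintype X] {L : Lefschetz R X} (F : MVField L)

section Multivectors

lemma mem_mclass (x : X) : x ∈ F.mclass x := (F.mclass_spec x).2

lemma mclass_eq_of_mem {x z : X} (h : z ∈ F.mclass x) : F.mclass z = F.mclass x :=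
  (F.cover z).unique ⟨(F.mclass_spec z).1, F.mem_mclass z⟩ ⟨(F.mclass_spec x).1, h⟩

lemma star_spec (x : X) : F.star x ∈ F.mclass x ∧ ∀ y ∈ F.mclass x, L.le y (F.star x) :=
  (F.isMV _ (F.mclass_spec x).1).2.exists.choose_spec

lemma star_eq_of_mem {x z : X} (h : z ∈ F.mclass x) : F.star z = F.star x := by
  have hz := F.star_spec z
  rw [F.mclass_eq_of_mem h] at hz
  exact (F.isMV _ (F.mclass_spec x).1).2.unique hz (F.star_spec x)

lemma star_star (x : X) : F.star (F.star x) = F.star x :=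
  F.star_eq_of_mem (F.star_spec x).1

lemma pi_of_ne_star {x : X} (h : x ≠ F.star x) : F.Pi x = {F.star x} := if_neg h

end Multivectors

section Compatibility

lemma subset_upperC (A : Set X) : A ⊆ F.upperC A :=
  fun x hx => Set.mem_biUnion hx (F.mem_mclass x)

lemma upperC_mono {A B : Set X} (h : A ⊆ B) : F.upperC A ⊆ F.upperC B :=
  Set.biUnion_subset_biUnion_left h

lemma upperC_subset_of_compat {A C : Set X} (hC : F.Compat C) (h : A ⊆ C) :
    F.upperC A ⊆ C :=
  Set.iUnion₂_subset fun x hx => hC x (h hx)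

lemma compat_upperC (A : Set X) : F.Compat (F.upperC A) := by
  intro x hx
  obtain ⟨a, ha, hxa⟩ := Set.mem_iUnion₂.mp hx
  rw [F.mclass_eq_of_mem hxa]
  exact Set.subset_biUnion_of_mem ha

lemma lowerC_mono {A B : Set X} (h : A ⊆ B) : F.lowerC A ⊆ F.lowerC B :=
  fun _ hx => ⟨h hx.1, hx.2.trans h⟩

lemma lowerC_eq_self {C : Set X} (hC : F.Compat C) : F.lowerC C = C :=
  Set.ext fun x => ⟨fun h => h.1, fun h => ⟨h, hC x h⟩⟩

lemma invPartIn_subset (W A : Set X) : F.InvPartIn W A ⊆ A := fun _ hx => hx.1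

lemma invPartIn_mono (W : Set X) {A B : Set X} (h : A ⊆ B) :
    F.InvPartIn W A ⊆ F.InvPartIn W B := by
  rintro x ⟨hxA, φ, hφ, hx, hval⟩
  exact ⟨h hxA, φ, hφ, hx, fun i => F.lowerC_mono h (hval i)⟩

lemma compat_of_invariantIn {W S : Set X} (hS : F.InvariantIn W S) : F.Compat S := by
  intro x hx
  rw [← hS] at hx
  obtain ⟨-, φ, -, ⟨i, hi⟩, hval⟩ := hx
  have hstar : F.mclass (F.star x) ⊆ S := (hi ▸ hval i).2
  rwa [F.mclass_eq_of_mem (F.star_spec x).1] at hstar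

end Compatibility

section Solutions

variable {F} {W : Set X}

lemma IsSolIn.exists_eq_star {φ : ℤ → X} (hφ : F.IsSolIn W φ) (i : ℤ) :
    ∃ j, φ j = F.star (φ i) := by
  by_cases h : φ i = F.star (φ i)
  · exact ⟨i, h⟩
  · have hnext := (hφ i).1
    rw [F.pi_of_ne_star h] at hnext
    exact ⟨i + 1, hnext⟩

lemma IsSolIn.comp_add_const {φ : ℤ → X} (hφ : F.IsSolIn W φ) (k : ℤ) :
    F.IsSolIn W (fun n => φ (n + k)) := fun n => by
  simpa only [add_right_comm n 1 k] using hφ (n + k)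

lemma isSolIn_piecewise {φ τ : ℤ → X} {a : ℤ}
    (hφ : ∀ n < a, φ (n + 1) ∈ F.PiIn W (φ n))
    (hτ : ∀ n > a, τ (n + 1) ∈ F.PiIn W (τ n)) (ha : τ (a + 1) ∈ F.PiIn W (φ a)) :
    F.IsSolIn W (fun n => if n ≤ a then φ n else τ n) := by
  intro n
  rcases lt_trichotomy n a with hn | rfl | hn
  · simpa only [if_pos hn.le, if_pos (show n + 1 ≤ a by omega)] using hφ n hn
  · simpa only [le_refl, if_true, if_neg (show ¬n + 1 ≤ n by omega)] using ha
  · simpa only [if_neg (show ¬n ≤ a by omega), if_neg (show ¬n + 1 ≤ a by omega)] using hτ n hn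

lemma IsSolIn.exists_periodic {φ : ℤ → X} (hφ : F.IsSolIn W φ) {i j : ℤ} (hij : i < j)
    (h : φ i = φ j) : ∃ ρ, F.IsSolIn W ρ ∧ ρ 0 = φ i ∧ ∀ n, ρ n ∈ φ '' Set.Ico i j := by
  set p := j - i
  have hp : 0 < p := sub_pos.mpr hij
  refine ⟨fun n => φ (i + n % p), fun n => ?_, by simp, fun n => ⟨i + n % p, ?_, rfl⟩⟩
  · have h0 := Int.emod_nonneg n hp.ne'
    have h1 := Int.emod_lt_of_pos n hp
    show φ (i + (n + 1) % p) ∈ F.PiIn W (φ (i + n % p))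
    have hsucc : (n + 1) % p = (n % p + 1) % p := (Int.emod_add_emod n p 1).symm
    rcases (show n % p + 1 < p ∨ n % p + 1 = p by omega) with hlt | heq
    · rw [hsucc, Int.emod_eq_of_lt (by omega) hlt, ← add_assoc]
      exact hφ _
    · rw [hsucc, heq, Int.emod_self, add_zero, h, show j = i + n % p + 1 by omega]
      exact hφ _
  · have h0 := Int.emod_nonneg n hp.ne'
    have h1 := Int.emod_lt_of_pos n hp
    constructor <;> omega

lemma IsSolIn.mem_invPartIn_upperC {ρ : ℤ → X} (hρ : F.IsSolIn W ρ) {A : Set X}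
    (hA : ∀ n, ρ n ∈ A) (m : ℤ) : ρ m ∈ F.InvPartIn W (F.upperC A) := by
  refine ⟨F.subset_upperC A (hA m), ρ, hρ, hρ.exists_eq_star m, fun n => ?_⟩
  rw [F.lowerC_eq_self (F.compat_upperC A)]
  exact F.subset_upperC A (hA n)

lemma InvariantIn.exists_forward_sol (hW : F.InvariantIn W W) {y : X} (hy : y ∈ W) (m : ℤ) :
    ∃ τ : ℤ → X, τ m = y ∧ ∀ n ≥ m, τ (n + 1) ∈ F.PiIn W (τ n) := by
  rw [← hW] at hy
  obtain ⟨-, φ, hφ, ⟨c, hc⟩, hval⟩ := hy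
  have hnext : ∃ τ : ℤ → X, F.IsSolIn W τ ∧ τ (m + 1) ∈ F.PiIn W y := by
    by_cases hys : y = F.star y
    · refine ⟨_, hφ.comp_add_const (c - m), ?_⟩
      simpa only [show m + (c - m) = c by ring, add_right_comm m 1, hc, ← hys] using hφ c
    · refine ⟨_, hφ.comp_add_const (c - (m + 1)), ?_⟩
      rw [show m + 1 + (c - (m + 1)) = c by ring, hc, PiIn, F.pi_of_ne_star hys]
      exact ⟨rfl, (hc ▸ hval c).1⟩
  obtain ⟨τ, hτ, hτm⟩ := hnext
  refine ⟨fun n => if n ≤ m then y else τ n, if_pos le_rfl, fun n hn => ?_⟩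
  rcases hn.eq_or_lt with rfl | hn
  · simpa only [le_refl, if_true, if_neg (show ¬m + 1 ≤ m by omega)] using hτm
  · simpa only [if_neg (show ¬n ≤ m by omega), if_neg (show ¬n + 1 ≤ m by omega)] using hτ n

end Solutions

section LimitSets

variable {F} {W : Set X}

lemma alphaIn_eq_of_eqOn_Iic {σ φ : ℤ → X} {T : ℤ} (h : Set.EqOn σ φ (Set.Iic T)) :
    F.alphaIn W σ = F.alphaIn W φ := by
  have key : ∀ σ φ : ℤ → X, Set.EqOn σ φ (Set.Iic T) →
      F.alphaIn W σ ⊆ F.alphaIn W φ := by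
    intro σ φ h z hz
    simp only [alphaIn, Set.mem_iInter] at hz ⊢
    intro k
    have hk := hz (k + (-T).toNat)
    rw [Set.image_congr fun i hi => h (show i ≤ T by simp only [Set.mem_ofPred_eq] at hi; omega)]
      at hk
    refine F.invPartIn_mono W (F.upperC_mono (Set.image_mono fun i hi => ?_)) hk
    simp only [Set.mem_ofPred_eq] at hi ⊢
    omega
  exact (key σ φ h).antisymm (key φ σ h.symm)

lemma alphaIn_subset_of_forall_le {φ : ℤ → X} {C : Set X} (hC : F.Compat C) {T : ℤ}
    (h : ∀ n ≤ T, φ n ∈ C) : F.alphaIn W φ ⊆ C := fun _ hz =>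
  F.upperC_subset_of_compat hC (Set.image_subset_iff.mpr fun i hi => h i (by
      simp only [Set.mem_ofPred_eq] at hi; omega))
    (F.invPartIn_subset _ _ (Set.mem_iInter.mp hz (-T).toNat))

lemma omegaIn_subset_of_forall_ge {φ : ℤ → X} {C : Set X} (hC : F.Compat C) {T : ℤ}
    (h : ∀ n ≥ T, φ n ∈ C) : F.omegaIn W φ ⊆ C := fun _ hz =>
  F.upperC_subset_of_compat hC (Set.image_subset_iff.mpr fun i hi => h i (by
      simp only [Set.mem_ofPred_eq] at hi; omega))
    (F.invPartIn_subset _ _ (Set.mem_iInter.mp hz T.toNat))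

lemma IsSolIn.mem_invPartIn_of_eq {φ : ℤ → X} (hφ : F.IsSolIn W φ) {i j : ℤ} (hij : i < j)
    (h : φ i = φ j) {S : Set ℤ} (hS : Set.Ico i j ⊆ S) :
    φ i ∈ F.InvPartIn W (F.upperC (φ '' S)) := by
  obtain ⟨ρ, hρ, hρ0, hρS⟩ := hφ.exists_periodic hij h
  rw [← hρ0]
  exact F.invPartIn_mono W (F.upperC_mono (Set.image_mono hS)) (hρ.mem_invPartIn_upperC hρS 0)

lemma IsSolIn.alphaIn_nonempty {φ : ℤ → X} (hφ : F.IsSolIn W φ) :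
    (F.alphaIn W φ).Nonempty := by
  obtain ⟨x, hx⟩ := Finite.exists_infinite_fiber fun n : ℕ => φ (-n)
  have hx := Set.infinite_coe_iff.mp hx
  refine ⟨x, Set.mem_iInter.mpr fun k => ?_⟩
  obtain ⟨i, hi, hki⟩ := hx.exists_gt k
  obtain ⟨j, hj, hij⟩ := hx.exists_gt i
  have hi : φ (-i) = x := hi
  have hj : φ (-j) = x := hj
  rw [← hj]
  exact hφ.mem_invPartIn_of_eq (by omega) (hj.trans hi.symm) fun n hn => by
    simp only [Set.mem_Ico, Set.mem_ofPred_eq] at hn ⊢; omega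

lemma IsSolIn.omegaIn_nonempty {φ : ℤ → X} (hφ : F.IsSolIn W φ) :
    (F.omegaIn W φ).Nonempty := by
  obtain ⟨x, hx⟩ := Finite.exists_infinite_fiber fun n : ℕ => φ n
  have hx := Set.infinite_coe_iff.mp hx
  refine ⟨x, Set.mem_iInter.mpr fun k => ?_⟩
  obtain ⟨i, hi, hki⟩ := hx.exists_gt k
  obtain ⟨j, hj, hij⟩ := hx.exists_gt i
  have hi : φ i = x := hi
  have hj : φ j = x := hj
  rw [← hi]
  exact hφ.mem_invPartIn_of_eq (by omega) (hi.trans hj.symm) fun n hn => by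
    simp only [Set.mem_Ico, Set.mem_ofPred_eq] at hn ⊢; omega

end LimitSets

section UnstableSet

def unstableSetIn (W A : Set X) : Set X :=
  {x | ∃ φ, F.IsSolIn W φ ∧ (∃ i, φ i = F.star x) ∧ F.alphaIn W φ ⊆ A}

lemma compat_unstableSetIn (W A : Set X) : F.Compat (F.unstableSetIn W A) := by
  rintro x ⟨φ, hφ, ⟨i, hi⟩, hα⟩ z hz
  exact ⟨φ, hφ, ⟨i, hi.trans (F.star_eq_of_mem hz).symm⟩, hα⟩

lemma connIn_subset_invPartIn_unstableSetIn {W A' A B : Set X} (h : A' ⊆ B) :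
    F.ConnIn W A' A ⊆ F.InvPartIn W (F.unstableSetIn W B) := by
  rintro x ⟨φ, hφ, hx, hα, -⟩
  have hφN : ∀ n, φ n ∈ F.unstableSetIn W B := fun n =>
    ⟨φ, hφ, hφ.exists_eq_star n, hα.trans h⟩
  refine ⟨⟨φ, hφ, hx, hα.trans h⟩, φ, hφ, hx, fun n => ?_⟩
  rw [F.lowerC_eq_self (F.compat_unstableSetIn W B)]
  exact hφN n

lemma trappingIn_unstableSetIn (hX : F.InvariantIn Set.univ Set.univ) (A : Set X) :
    F.TrappingIn Set.univ (F.unstableSetIn Set.univ A) := by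
  refine ⟨Set.subset_univ _, F.compat_unstableSetIn _ A, ?_⟩
  rintro x ⟨φ, hφ, ⟨a, ha⟩, hα⟩ y ⟨hy, -⟩
  by_cases hxs : x = F.star x
  · obtain ⟨τ, hτa, hτ⟩ := hX.exists_forward_sol (Set.mem_univ y) (a + 1)
    have hσ : F.IsSolIn Set.univ (fun n => if n ≤ a then φ n else τ n) :=
      isSolIn_piecewise (fun n _ => hφ n) hτ
        (by rw [hτa, ha, ← hxs]; exact ⟨hy, trivial⟩)
    obtain ⟨j, hj⟩ := hσ.exists_eq_star (a + 1)
    refine ⟨_, hσ, ⟨j, ?_⟩, ?_⟩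
    · rwa [if_neg (show ¬a + 1 ≤ a by omega), hτa] at hj
    · rwa [alphaIn_eq_of_eqOn_Iic (φ := φ) (T := a) fun n hn => if_pos (Set.mem_Iic.mp hn)]
  · rw [F.pi_of_ne_star hxs, Set.mem_singleton_iff] at hy
    exact ⟨φ, hφ, ⟨a, by rw [hy, F.star_star, ha]⟩, hα⟩

lemma morseSetIn_subset_invPartIn_unstableSetIn {W : Set X} {P : Type*} (M : P → Set X)
    (I : Set P) : F.MorseSetIn W M I ⊆ F.InvPartIn W (F.unstableSetIn W (⋃ r ∈ I, M r)) :=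
  Set.iUnion₂_subset fun _ _ => Set.iUnion₂_subset fun _ hr' =>
    F.connIn_subset_invPartIn_unstableSetIn (Set.subset_biUnion_of_mem (u := M) hr')

end UnstableSet

namespace MorseDecompIn

variable {F} {W : Set X} {P : Type*} [Finite P] {le : P → P → Prop} {M : P → Set X}
  {I : Set P}

lemma eq_of_mem (hM : F.MorseDecompIn W le M) {x : X} {r r' : P} (hr : x ∈ M r)
    (hr' : x ∈ M r') : r = r' :=
  by_contra fun hne => Set.disjoint_left.mp (hM.2.2.1 r r' hne) hr hr'

lemma exists_omegaIn_subset_of_alphaIn_subset (hM : F.MorseDecompIn W le M)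
    (hI : ∀ r' r, le r' r → r ∈ I → r' ∈ I) {ρ : ℤ → X} (hρ : F.IsSolIn W ρ)
    (hα : F.alphaIn W ρ ⊆ ⋃ r ∈ I, M r) : ∃ r ∈ I, F.omegaIn W ρ ⊆ M r := by
  obtain ⟨u, u', hle, hαu, hωu⟩ := hM.2.2.2.1 ρ hρ
  obtain ⟨z, hz⟩ := hρ.alphaIn_nonempty
  obtain ⟨r', hr'I, hzr'⟩ := Set.mem_iUnion₂.mp (hα hz)
  exact ⟨u, hI u u' hle (hM.eq_of_mem (hαu hz) hzr' ▸ hr'I), hωu⟩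

lemma mem_of_mem_unstableSetIn (hM : F.MorseDecompIn W le M)
    (hI : ∀ r' r, le r' r → r ∈ I → r' ∈ I) {z : X} {s : P}
    (hz : z ∈ F.unstableSetIn W (⋃ r ∈ I, M r)) (hzs : z ∈ M s) : s ∈ I := by
  obtain ⟨σ, hσ, ⟨a, ha⟩, hασ⟩ := hz
  have hMs := (hM.2.1 s).1
  rw [← hMs] at hzs
  obtain ⟨-, τ, hτ, ⟨b, hb⟩, hτs⟩ := hzs
  have hτ' := hτ.comp_add_const (b - a)
  have hτ'a : τ (a + (b - a)) = F.star z := by rw [add_sub_cancel, hb]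
  set ρ : ℤ → X := fun n => if n ≤ a then σ n else τ (n + (b - a))
  have hρ : F.IsSolIn W ρ :=
    isSolIn_piecewise (fun n _ => hσ n) (fun n _ => hτ' n) (by rw [ha, ← hτ'a]; exact hτ' a)
  have hαρ : F.alphaIn W ρ ⊆ ⋃ r ∈ I, M r := by
    rwa [alphaIn_eq_of_eqOn_Iic (φ := σ) (T := a) fun n hn => if_pos (Set.mem_Iic.mp hn)]
  have hωρ : F.omegaIn W ρ ⊆ M s :=
    omegaIn_subset_of_forall_ge (F.compat_of_invariantIn hMs) (T := a + 1) fun n hn => by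
      simp only [ρ, if_neg (show ¬n ≤ a by omega)]
      exact (hτs _).1
  obtain ⟨u, huI, hωu⟩ := hM.exists_omegaIn_subset_of_alphaIn_subset hI hρ hαρ
  obtain ⟨w, hw⟩ := hρ.omegaIn_nonempty
  exact hM.eq_of_mem (hωu hw) (hωρ hw) ▸ huI

lemma invPartIn_unstableSetIn_subset_morseSetIn (hM : F.MorseDecompIn W le M)
    (hI : ∀ r' r, le r' r → r ∈ I → r' ∈ I) :
    F.InvPartIn W (F.unstableSetIn W (⋃ r ∈ I, M r)) ⊆ F.MorseSetIn W M I := by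
  rintro x ⟨-, ψ, hψ, hx, hψN⟩
  rw [F.lowerC_eq_self (F.compat_unstableSetIn _ _)] at hψN
  obtain ⟨s, s', hss', hα, hω⟩ := hM.2.2.2.1 ψ hψ
  obtain ⟨z, hz⟩ := hψ.alphaIn_nonempty
  have hzN := alphaIn_subset_of_forall_le (F.compat_unstableSetIn _ _) (T := 0)
    (fun n _ => hψN n) hz
  have hs'I : s' ∈ I := hM.mem_of_mem_unstableSetIn hI hzN (hα hz)
  exact Set.mem_iUnion₂.mpr ⟨s, hI s s' hss' hs'I,
    Set.mem_iUnion₂.mpr ⟨s', hs'I, ψ, hψ, hx, hα, hω⟩⟩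

end MorseDecompIn

end CMVF.MVField

variable {R : Type*} [Ring R] {X : Type*} [Fintype X]

/-- Theorem: if `I` is a lower set in `ℙ`, then the Morse set `M(I)` is an attractor. -/
theorem morse_set_attractor (L : Lefschetz R X) (F : MVField L)
    (hX : F.InvariantIn Set.univ Set.univ)
    {P : Type*} [Finite P] (le : P → P → Prop) (M : P → Set X)
    (hM : F.MorseDecompIn Set.univ le M) (I : Set P)
    (hI : ∀ r' r, le r' r → r ∈ I → r' ∈ I) :
    F.AttractorIn Set.univ (F.MorseSetIn Set.univ M I) :=
  ⟨F.unstableSetIn Set.univ (⋃ r ∈ I, M r), F.trappingIn_unstableSetIn hX _,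
    (F.morseSetIn_subset_invPartIn_unstableSetIn M I).antisymm
      (hM.invPartIn_unstableSetIn_subset_morseSetIn hI)⟩
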